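/- arXiv:1904.07137 — 5 statements merged into one kernel-verified Lean document; each statement's English description precedes it below -/
import Mathlib

section
/- A word w with |w| ≥ 3 is a factor of the Thue–Morse word t if and only if w is a factor of μⁿ(a), where n = 2 + ⌈log₂(|w|−1)⌉. -/
/-- Alphabet: `false` = a, `true` = b. The Thue–Morse morphism μ(a)=ab, μ(b)=ba. -/
def mu (w : List Bool) : List Bool := w.flatMap (fun x => [x, !x])

/-- The Thue–Morse word: `tm n` is the parity of the binary digit sum of `n`. -/
def tm (n : ℕ) : Bool := (Nat.digits 2 n).sum % 2 == 1

/-- `w` is a (finite) factor/segment of the Thue–Morse word. -/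
def IsFactorTM (w : List Bool) : Prop :=
  ∃ i : ℕ, w = (List.range w.length).map (fun k => tm (i + k))

/-- Apply the endomorphism of {a,b}⁺ determined by a ↦ fa, b ↦ fb to a word. -/
def subst (fa fb : List Bool) (w : List Bool) : List Bool :=
  w.flatMap (fun x => if x then fb else fa)

/-!
Since `t = μ(t)`, the factor of `t` of length `2ʲ ℓ` at position `2ʲ q` is `μʲ` of the factor of
length `ℓ` at position `q`. A factor of length at most `2 · 2ʲ + 1` fits inside an aligned window
of length `3 · 2ʲ`, which is `μʲ` of a factor of length three. The factors of length three of `t`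
are the six words other than `aaa` and `bbb`, all of which occur in `μ³(a) = abbabaab`; hence the
factor occurs in `μʲ⁺³(a)`. Conversely `μⁿ(a)` is a prefix of `t`.
-/

def tmSeg (i n : ℕ) : List Bool := (List.range n).map (fun k => tm (i + k))

lemma tm_zero : tm 0 = false := rfl

lemma tm_two_mul (n : ℕ) : tm (2 * n) = tm n := by
  rcases Nat.eq_zero_or_pos n with rfl | hpos
  · rfl
  · unfold tm
    rw [Nat.digits_def' (by norm_num) (by omega)]
    simp [Nat.mul_div_cancel_left _ two_pos]

lemma tm_two_mul_add_one (n : ℕ) : tm (2 * n + 1) = !tm n := by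
  unfold tm
  rw [Nat.digits_def' (by norm_num) (by omega), show (2 * n + 1) / 2 = n by omega]
  rcases Nat.mod_two_eq_zero_or_one (Nat.digits 2 n).sum with h | h <;>
    simp [Nat.add_mod, h]

lemma length_tmSeg (i n : ℕ) : (tmSeg i n).length = n := by simp [tmSeg]

lemma tmSeg_add (i a b : ℕ) : tmSeg i (a + b) = tmSeg i a ++ tmSeg (i + a) b := by
  simp only [tmSeg, List.range_add, List.map_append, List.map_map]
  congr 1
  exact List.map_congr_left fun k _ => by simp only [Function.comp, Nat.add_assoc]

lemma tmSeg_one (i : ℕ) : tmSeg i 1 = [tm i] := rfl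

lemma tmSeg_two (i : ℕ) : tmSeg i 2 = [tm i, tm (i + 1)] := rfl

lemma tmSeg_three (i : ℕ) : tmSeg i 3 = [tm i, tm (i + 1), tm (i + 2)] := rfl

lemma mu_append (u v : List Bool) : mu (u ++ v) = mu u ++ mu v :=
  List.flatMap_append

lemma mu_tmSeg (i n : ℕ) : mu (tmSeg i n) = tmSeg (2 * i) (2 * n) := by
  induction n with
  | zero => rfl
  | succ n ih =>
    rw [tmSeg_add, mu_append, ih, Nat.mul_succ, tmSeg_add, ← Nat.mul_add, tmSeg_one, tmSeg_two,
      tm_two_mul, tm_two_mul_add_one]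
    rfl

lemma mu_iterate_tmSeg (k i n : ℕ) : mu^[k] (tmSeg i n) = tmSeg (2 ^ k * i) (2 ^ k * n) := by
  induction k with
  | zero => simp
  | succ k ih =>
    rw [Function.iterate_succ_apply', ih, mu_tmSeg, pow_succ', Nat.mul_assoc, Nat.mul_assoc]

lemma mu_iterate_false (n : ℕ) : mu^[n] [false] = tmSeg 0 (2 ^ n) := by
  simpa [← tm_zero, ← tmSeg_one] using mu_iterate_tmSeg n 0 1

lemma List.IsInfix.mu_iterate {u v : List Bool} (h : u <:+: v) (n : ℕ) :
    mu^[n] u <:+: mu^[n] v := by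
  induction n with
  | zero => exact h
  | succ n ih =>
    simp only [Function.iterate_succ_apply']
    exact ih.flatMap _

lemma tmSeg_infix_tmSeg {i ℓ a n : ℕ} (ha : a ≤ i) (hn : i + ℓ ≤ a + n) :
    tmSeg i ℓ <:+: tmSeg a n := by
  refine ⟨tmSeg a (i - a), tmSeg (i + ℓ) (a + n - (i + ℓ)), ?_⟩
  conv_rhs => rw [show n = (i - a) + (ℓ + (a + n - (i + ℓ))) by omega, tmSeg_add, tmSeg_add,
    show a + (i - a) = i by omega]
  rw [List.append_assoc]

lemma tm_ne_or_ne (q : ℕ) : tm q ≠ tm (q + 1) ∨ tm (q + 1) ≠ tm (q + 2) := by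
  obtain ⟨n, rfl | rfl⟩ := Nat.even_or_odd' q
  · left
    rw [tm_two_mul, tm_two_mul_add_one]
    cases tm n <;> decide
  · right
    rw [show 2 * n + 1 + 1 = 2 * (n + 1) by ring, show 2 * n + 1 + 2 = 2 * (n + 1) + 1 by ring,
      tm_two_mul, tm_two_mul_add_one]
    cases tm (n + 1) <;> decide

lemma tmSeg_three_infix_mu_iterate_three (q : ℕ) : tmSeg q 3 <:+: mu^[3] [false] := by
  have hμ3 : mu^[3] [false] = [false, true, true, false, true, false, false, true] := rfl
  have hne := tm_ne_or_ne q
  rw [tmSeg_three, hμ3]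
  revert hne
  cases tm q <;> cases tm (q + 1) <;> cases tm (q + 2) <;> decide

lemma tmSeg_infix_mu_iterate {i j ℓ : ℕ} (hℓ : ℓ ≤ 2 * 2 ^ j + 1) :
    tmSeg i ℓ <:+: mu^[j + 3] [false] := by
  set m := 2 ^ j
  have hm : 0 < m := Nat.two_pow_pos j
  have hi : m * (i / m) + i % m = i := Nat.div_add_mod i m
  have hr : i % m < m := Nat.mod_lt i hm
  calc tmSeg i ℓ <:+: tmSeg (m * (i / m)) (m * 3) := tmSeg_infix_tmSeg (by omega) (by omega)
    _ = mu^[j] (tmSeg (i / m) 3) := (mu_iterate_tmSeg j _ _).symm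
    _ <:+: mu^[j] (mu^[3] [false]) := (tmSeg_three_infix_mu_iterate_three _).mu_iterate j
    _ = mu^[j + 3] [false] := (Function.iterate_add_apply mu j 3 _).symm

lemma exists_eq_tmSeg_of_infix {u : List Bool} {a n : ℕ} (h : u <:+: tmSeg a n) :
    ∃ i, u = tmSeg i u.length := by
  obtain ⟨s, t, hst⟩ := h
  have hn : n = s.length + (u.length + t.length) := by
    simpa [length_tmSeg, Nat.add_assoc] using (congrArg List.length hst).symm
  rw [hn, tmSeg_add, tmSeg_add, List.append_assoc] at hst
  have hs := List.append_inj hst (length_tmSeg _ _).symm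
  exact ⟨_, (List.append_inj hs.2 (length_tmSeg _ _).symm).1⟩

/-- A word of length ≥ 3 is a factor of t iff it is a factor of μⁿ(a) with
    n = 2 + ⌈log₂(|w|−1)⌉. -/
theorem factor_iff_factor_mu_pow (w : List Bool) (hw : 3 ≤ w.length) :
    IsFactorTM w ↔ w <:+: mu^[2 + Nat.clog 2 (w.length - 1)] [false] := by
  obtain ⟨j, hj⟩ : ∃ j, Nat.clog 2 (w.length - 1) = j + 1 :=
    Nat.exists_eq_add_one.mpr (Nat.clog_pos one_lt_two (by omega))
  have hlen : w.length - 1 ≤ 2 ^ (j + 1) := hj ▸ Nat.le_pow_clog one_lt_two _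
  rw [hj, show 2 + (j + 1) = j + 3 by omega]
  constructor
  · rintro ⟨i, hi⟩
    rw [hi]
    exact tmSeg_infix_mu_iterate (by omega)
  · intro h
    rw [mu_iterate_false] at h
    exact exists_eq_tmSeg_of_infix h
end

section
/- Let X = {ab, ba} and let s ∈ X⁺ with |s| ≥ 4. If u and v are words such that u·s·v ∈ X⁺ and |u| is odd, then u·s·v contains an overlap (i.e., a factor of the form xwxwx with x a letter and w a possibly empty word). -/
/-- `s` is a nonempty concatenation of the blocks ab and ba. -/
def IsXWord (s : List Bool) : Prop :=
  ∃ l : List (List Bool), l ≠ [] ∧ (∀ x ∈ l, x = [false, true] ∨ x = [true, false]) ∧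
    s = l.flatten

/-- `s` contains an overlap, i.e. a factor of the form xwxwx with x a letter. -/
def HasOverlap (s : List Bool) : Prop :=
  ∃ (x : Bool) (w p q : List Bool), s = p ++ ([x] ++ w ++ [x] ++ w ++ [x]) ++ q

theorem List.getElem_flatten_add_one_of_even {l : List (List Bool)}
    (hl : ∀ x ∈ l, x = [false, true] ∨ x = [true, false]) {i : ℕ} (hi : Even i)
    (h : i + 1 < l.flatten.length) : l.flatten[i + 1] = !l.flatten[i] := by
  induction l generalizing i with
  | nil => simp at h
  | cons x l ih =>
    have hl' : ∀ y ∈ l, y = [false, true] ∨ y = [true, false] :=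
      fun y hy => hl y (List.mem_cons_of_mem _ hy)
    obtain ⟨k, rfl⟩ := hi
    rcases hl x List.mem_cons_self with rfl | rfl <;> rcases k with _ | k
    all_goals first
      | rfl
      | simp only [show k + 1 + (k + 1) = k + k + 1 + 1 by omega, List.flatten_cons,
          List.cons_append, List.nil_append, List.getElem_cons_succ] at h ⊢
        exact ih hl' ⟨k, rfl⟩ (by simpa using h)

theorem IsXWord.getElem_add_one_of_even {w : List Bool} (hw : IsXWord w) {i : ℕ} (hi : Even i)
    (h : i + 1 < w.length) : w[i + 1] = !w[i] := by
  obtain ⟨l, -, hl, rfl⟩ := hw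
  exact List.getElem_flatten_add_one_of_even hl hi h

theorem IsXWord.getElem_infix_add_one_of_even {p w q : List Bool} (hw : IsXWord (p ++ w ++ q))
    (hp : Even p.length) {i : ℕ} (hi : Even i) (h : i + 1 < w.length) :
    w[i + 1] = !w[i] := by
  have := hw.getElem_add_one_of_even (i := p.length + i) (hp.add hi) (by simp; omega)
  simpa [List.getElem_append_right, List.getElem_append_left, h, Nat.add_assoc,
    show i < w.length by omega] using this

theorem IsXWord.isChain_ne_cons {p s q : List Bool} {c : Bool} (hs : IsXWord s)
    (hw : IsXWord (p ++ c :: s ++ q)) (hp : Even p.length) : (c :: s).IsChain (· ≠ ·) := by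
  refine List.isChain_iff_getElem.2 fun i hi => ?_
  rcases Nat.even_or_odd' i with ⟨k, rfl | rfl⟩
  · simp [hw.getElem_infix_add_one_of_even hp (even_two_mul k) hi]
  · simp [hs.getElem_add_one_of_even (even_two_mul k) (by simp at hi; omega)]

theorem HasOverlap.of_infix {w t : List Bool} (h : HasOverlap w) (hwt : w <:+: t) :
    HasOverlap t := by
  obtain ⟨x, v, p, q, rfl⟩ := h
  obtain ⟨p', q', rfl⟩ := hwt
  exact ⟨x, v, p' ++ p, q ++ q', by simp⟩

theorem HasOverlap.of_isChain_ne {w : List Bool} (hw : w.IsChain (· ≠ ·)) (hlen : 5 ≤ w.length) :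
    HasOverlap w := by
  obtain ⟨a, b, c, d, e, r, rfl⟩ : ∃ a b c d e r, w = a :: b :: c :: d :: e :: r := by
    match w, hlen with
    | a :: b :: c :: d :: e :: r, _ => exact ⟨a, b, c, d, e, r, rfl⟩
  simp only [List.isChain_cons_cons] at hw
  obtain ⟨hab, hbc, hcd, hde, -⟩ := hw
  refine ⟨a, [b], [], r, ?_⟩
  cases a <;> cases b <;> cases c <;> cases d <;> cases e <;> simp at hab hbc hcd hde ⊢

/-- Synchronization lemma of de Luca and Varricchio. -/
theorem luca_varricchio (s u v : List Bool) (hs : IsXWord s) (hl : 4 ≤ s.length)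
    (husv : IsXWord (u ++ s ++ v)) (hu : Odd u.length) :
    HasOverlap (u ++ s ++ v) := by
  have hne : u ≠ [] := by rintro rfl; simp at hu
  obtain ⟨p, c, rfl⟩ : ∃ p c, u = p ++ [c] :=
    ⟨u.dropLast, u.getLast hne, (List.dropLast_append_getLast hne).symm⟩
  have hp : Even p.length := by simpa [Nat.odd_add_one] using hu
  rw [List.append_assoc p, List.singleton_append] at husv ⊢
  have hchain := hs.isChain_ne_cons husv hp
  exact (HasOverlap.of_isChain_ne hchain (by simp; omega)).of_infix (List.infix_append _ _ _)
end

section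
/- If a factor w of the Thue–Morse word t is (right-)special, i.e., both wa and wb are factors of t, then μ(w) is also a special factor of t. -/
lemma mu_key : ∀ (u : List Bool) (i : ℕ),
    u = (List.range u.length).map (fun k => tm (i + k)) →
    mu u = (List.range (mu u).length).map (fun k => tm (2 * i + k)) := by
  intro u
  induction u with
  | nil => intro i _; rfl
  | cons b u ih =>
    intro i hu
    rw [List.length_cons, List.range_succ_eq_map] at hu
    simp only [List.map_cons, List.map_map] at hu
    obtain ⟨hb, hu⟩ := List.cons_eq_cons.mp hu
    have hf : ((fun k => tm (i + k)) ∘ Nat.succ) = (fun k => tm ((i + 1) + k)) := by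
      funext k; simp only [Function.comp_apply]; congr 1; omega
    rw [hf] at hu
    have ihu := ih (i + 1) hu
    have hlen : (mu (b :: u)).length = 2 + (mu u).length := by
      simp [mu]; omega
    show [b, !b] ++ mu u = _
    rw [hlen, List.range_add, List.map_append, List.map_map]
    have h2 : List.range 2 = [0, 1] := by decide
    rw [h2]
    congr 1
    · simp only [List.map_cons, List.map_nil]
      rw [hb]
      simp [tm_two_mul, tm_two_mul_add_one]
    · conv_lhs => rw [ihu]
      apply List.map_congr_left
      intro k _
      simp only [Function.comp_apply]
      congr 1
      omega

lemma factor_mu {u : List Bool} (h : IsFactorTM u) : IsFactorTM (mu u) := by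
  obtain ⟨i, hi⟩ := h
  exact ⟨2 * i, mu_key u i hi⟩

lemma factor_prefix {v s : List Bool} (h : IsFactorTM (v ++ s)) : IsFactorTM v := by
  obtain ⟨i, hi⟩ := h
  refine ⟨i, ?_⟩
  have hle : v.length ≤ (v ++ s).length := by simp
  calc v = (v ++ s).take v.length := by simp
    _ = ((List.range (v ++ s).length).map (fun k => tm (i + k))).take v.length := by rw [← hi]
    _ = ((List.range (v ++ s).length).take v.length).map (fun k => tm (i + k)) := by
        rw [List.map_take]
    _ = (List.range v.length).map (fun k => tm (i + k)) := by rw [List.take_range, Nat.min_eq_left hle]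

/-- If w is a (right-)special factor of t, then so is μ(w). -/
theorem special_mu (w : List Bool)
    (h : IsFactorTM (w ++ [false]) ∧ IsFactorTM (w ++ [true])) :
    IsFactorTM (mu w ++ [false]) ∧ IsFactorTM (mu w ++ [true]) := by
  obtain ⟨h0, h1⟩ := h
  constructor
  · have := factor_mu h0
    rw [mu_append] at this
    have : IsFactorTM ((mu w ++ [false]) ++ [true]) := by
      simpa [mu] using this
    exact factor_prefix this
  · have := factor_mu h1
    rw [mu_append] at this
    have : IsFactorTM ((mu w ++ [true]) ++ [false]) := by
      simpa [mu] using this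
    exact factor_prefix this
end

section
/- The words a²ba² and b²ab² are not factors of the Thue–Morse word t, but each becomes a factor of t after applying some endomorphism of {a,b}⁺ (i.e., they are unavoidable in t). -/
/-- `w` is unavoidable in t: some endomorphism of {a,b}⁺ maps it to a factor of t. -/
def UnavoidableTM (w : List Bool) : Prop :=
  ∃ fa fb : List Bool, fa ≠ [] ∧ fb ≠ [] ∧ IsFactorTM (subst fa fb w)

theorem tm_odd : ∀ k, 0 < k → tm (2*k+1) = !tm (2*k) := by
  intro k h
  have h1 : (2*k+1) % 2 = 1 := by omega
  have h2 : (2*k) % 2 = 0 := by omega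
  have h3 : (2*k+1) / 2 = k := by omega
  have h4 : (2*k) / 2 = k := by omega
  rw [tm, tm, Nat.digits_def' (by norm_num : 1 < 2) (by omega : 0 < 2*k),
      Nat.digits_def' (by norm_num : 1 < 2) (by omega : 0 < 2*k+1),
      h1, h2, h3, h4, List.sum_cons, List.sum_cons]
  obtain ⟨m, hm⟩ : ∃ m, (Nat.digits 2 k).sum = m := ⟨_, rfl⟩
  rw [hm]
  rcases Nat.mod_two_eq_zero_or_one m with h'|h' <;>
    · have e1 : (1 + m) % 2 = (1 + m % 2) % 2 := by omega
      have e2 : (0 + m) % 2 = m % 2 := by omega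
      rw [e1, e2, h']
      rfl

theorem tm_eq_succ_odd {n : ℕ} (h : tm n = tm (n+1)) : n % 2 = 1 := by
  rcases Nat.even_or_odd n with ⟨k, hk⟩ | hn
  · exfalso
    rcases Nat.eq_zero_or_pos k with rfl | hk0
    · subst hk; revert h; norm_num [tm]
    · have h5 := tm_odd k hk0
      rw [show n = 2*k by omega] at h
      rw [← h] at h5
      cases htm : tm (2*k) <;> rw [htm] at h5 <;> exact Bool.noConfusion h5
  · rcases hn with ⟨m, hm⟩; omega

/-- a²ba² and b²ab² are not factors of t but are unavoidable in t. -/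
theorem aabaa_unavoidable_not_factor :
    ¬ IsFactorTM [false, false, true, false, false] ∧
    ¬ IsFactorTM [true, true, false, true, true] ∧
    UnavoidableTM [false, false, true, false, false] ∧
    UnavoidableTM [true, true, false, true, true] := by
  refine ⟨?_, ?_, ?_, ?_⟩
  · rintro ⟨i, hi⟩
    simp [List.range_succ] at hi
    obtain ⟨h0, h1, h2, h3, h4⟩ := hi
    have ha : i % 2 = 1 := tm_eq_succ_odd (by rw [h0, h1])
    have hb : (i+3) % 2 = 1 := tm_eq_succ_odd (by
      rw [h3, show i+3+1 = i+4 by ring, h4])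
    omega
  · rintro ⟨i, hi⟩
    simp [List.range_succ] at hi
    obtain ⟨h0, h1, h2, h3, h4⟩ := hi
    have ha : i % 2 = 1 := tm_eq_succ_odd (by rw [h0, h1])
    have hb : (i+3) % 2 = 1 := tm_eq_succ_odd (by
      rw [h3, show i+3+1 = i+4 by ring, h4])
    omega
  · exact ⟨[false], [true, true], by simp, by simp,
      ⟨5, by norm_num [subst, tm, List.range_succ]⟩⟩
  · exact ⟨[false, false], [true], by simp, by simp,
      ⟨21, by norm_num [subst, tm, List.range_succ]⟩⟩
end

section
/- The Thue–Morse word t and its letter-exchange ξ(t) have no common infinite suffix. -/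
lemma key (p q : ℕ) (hle : q ≤ p) (h : ∀ k, tm (p + k) = !tm (q + k)) : False := by
  set d := p - q with hd
  rcases Nat.eq_zero_or_pos d with h0 | h0
  · have hpq : p = q := by omega
    have := h 0
    rw [hpq] at this
    exact (Bool.eq_not_self _).mp this
  · have H : ∀ n, q ≤ n → tm (n + d) = !tm n := by
      intro n hn
      have := h (n - q)
      have e1 : p + (n - q) = n + d := by omega
      have e2 : q + (n - q) = n := by omega
      rwa [e1, e2] at this
    have H2 : ∀ n, q ≤ n → tm (n + 2 * d) = tm n := by
      intro n hn
      have e : n + 2 * d = (n + d) + d := by omega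
      rw [e, H (n + d) (by omega), H n hn, Bool.not_not]
    have h1 : tm (q + d) = tm q := by
      have a1 : tm (2 * (q + d)) = tm (q + d) := tm_two_mul _
      have a2 : tm (2 * (q + d)) = tm (2 * q) := by
        have e : 2 * (q + d) = 2 * q + 2 * d := by ring
        rw [e]; exact H2 (2 * q) (by omega)
      have a3 : tm (2 * q) = tm q := tm_two_mul _
      rw [← a1, a2, a3]
    have h2 : tm (q + d) = !tm q := H q le_rfl
    rw [h1] at h2
    exact (Bool.eq_not_self _).mp h2

/-- t and ξ(t) have no common infinite suffix. -/
theorem no_common_suffix :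
    ¬ ∃ w : ℕ → Bool, (∃ p : ℕ, ∀ k, w k = tm (p + k)) ∧
      (∃ q : ℕ, ∀ k, w k = !tm (q + k)) := by
  rintro ⟨w, ⟨p, hp⟩, ⟨q, hq⟩⟩
  have h : ∀ k, tm (p + k) = !tm (q + k) := fun k => by rw [← hp k, hq k]
  rcases le_total q p with hle | hle
  · exact key p q hle h
  · refine key q p hle (fun k => ?_)
    have := h k
    cases hb : tm (q + k) <;> simp [hb] at this <;> simp [this]
end
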